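/- With s and C as in the fake Casimir setup, [sC] = 2[sCC] holds, where [sC] = s_12C_13 + s_12C_23 + s_13C_23 + C_12s_13 + C_12s_23 + C_13s_23 − s_23C_13 − s_23C_12 − s_13C_12 − C_23s_13 − C_23s_12 − C_13s_12 and [sCC] = s_12C_13C_23 + C_12s_13C_23 + C_12C_13s_23 − s_23C_13C_12 − C_23s_13C_12 − C_23C_13s_12, as operators on (C^{(n|n)})^{⊗3}. -/

import Mathlib

open Matrix BigOperators

/-- Index set {±1,...,±n}: `Sum.inl k` represents the negative index −(k+1) (odd),
`Sum.inr k` represents the positive index k+1 (even). -/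
abbrev Idx (n : ℕ) := Fin n ⊕ Fin n

/-- parity: 1 for negative (odd) indices, 0 for positive (even) indices -/
def par {n : ℕ} : Idx n → ℕ
  | Sum.inl _ => 1
  | Sum.inr _ => 0

/-- negation i ↦ −i -/
def ng {n : ℕ} : Idx n → Idx n := Sum.swap

/-- absolute value -/
def ab {n : ℕ} : Idx n → ℕ
  | Sum.inl k => (k : ℕ) + 1
  | Sum.inr k => (k : ℕ) + 1

def ppos {n : ℕ} (k : Fin n) : Idx n := Sum.inr k
def nneg {n : ℕ} (k : Fin n) : Idx n := Sum.inl k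

/-- gl(n|n) as matrices indexed by {±1,...,±n} -/
abbrev gl (R : Type) [CommRing R] (n : ℕ) := Matrix (Idx n) (Idx n) R

variable (R : Type) [CommRing R] {n : ℕ}

/-- elementary matrix E_ij -/
def E (i j : Idx n) : gl R n := Matrix.single i j 1

/-- 𝖤_ij = E_ij − (−1)^{p(i)(p(j)+1)} E_{−j,−i} -/
def Em (i j : Idx n) : gl R n :=
  E R i j - ((-1 : R) ^ (par i * (par j + 1))) • E R (ng j) (ng i)

/-- projection onto the parity-d component -/
def proj (d : ℕ) (X : gl R n) : gl R n :=
  fun i j => if (par i + par j) % 2 = d % 2 then X i j else 0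

/-- the super bracket, extended bilinearly from homogeneous components:
[X,Y] = XY − (−1)^{|X||Y|} YX on homogeneous elements -/
def sbr (X Y : gl R n) : gl R n :=
  X * Y - (proj R 0 Y * proj R 0 X + proj R 0 Y * proj R 1 X
    + proj R 1 Y * proj R 0 X - proj R 1 Y * proj R 1 X)

/-- the involution ι(X) = −π(X^st) -/
def iota (X : gl R n) : gl R n :=
  fun a b => -((-1 : R) ^ (par (ng b) * (par (ng a) + 1))) * X (ng b) (ng a)

/-- X is homogeneous of parity d -/
def IsHom (d : ℕ) (X : gl R n) : Prop :=
  ∀ i j, (par i + par j) % 2 ≠ d % 2 → X i j = 0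

/-- supertrace -/
def Str (X : gl R n) : R := ∑ i, ((-1 : R) ^ (par i)) * X i i

/-- supertrace form B(X,Y) = Str(XY) -/
def BF (X Y : gl R n) : R := Str R (X * Y)

/-- generators of the butterfly subalgebra b_n -/
def bGen (n : ℕ) : Set (gl R n) :=
  {M | (∃ i j : Idx n, ab i < ab j ∧ M = E R i j) ∨
       (∃ k : Fin n, M = E R (ppos k) (ppos k) + E R (nneg k) (nneg k)) ∨
       (∃ k : Fin n, M = E R (ppos k) (nneg k))}

/-- operators on the super tensor square -/
abbrev M2 (R : Type) [CommRing R] (n : ℕ) := Matrix (Idx n × Idx n) (Idx n × Idx n) R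
/-- operators on the super tensor cube -/
abbrev M3 (R : Type) [CommRing R] (n : ℕ) :=
  Matrix (Idx n × Idx n × Idx n) (Idx n × Idx n × Idx n) R

/-- super (Koszul-signed) tensor product A ⊗ B of matrices as an operator on V ⊗ V:
(A⊗B)(e_c ⊗ e_d) = (−1)^{|B| p(c)} A e_c ⊗ B e_d -/
def kron2 (A B : gl R n) : M2 R n :=
  fun x y => ((-1 : R) ^ ((par x.2 + par y.2) * par y.1)) * A x.1 y.1 * B x.2 y.2

/-- M acting on factors 1,2 of the super tensor cube -/
def lift12 (M : M2 R n) : M3 R n :=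
  fun x y => if x.2.2 = y.2.2 then M (x.1, x.2.1) (y.1, y.2.1) else 0

/-- M acting on factors 1,3 of the super tensor cube (with Koszul signs) -/
def lift13 (M : M2 R n) : M3 R n :=
  fun x y => if x.2.1 = y.2.1 then
    ((-1 : R) ^ ((par x.2.2 + par y.2.2) * par x.2.1)) * M (x.1, x.2.2) (y.1, y.2.2) else 0

/-- M acting on factors 2,3 of the super tensor cube (with Koszul signs) -/
def lift23 (M : M2 R n) : M3 R n :=
  fun x y => if x.1 = y.1 then
    ((-1 : R) ^ ((par x.2.1 + par y.2.1 + par x.2.2 + par y.2.2) * par x.1)) * M x.2 y.2 else 0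

noncomputable section

/-- the fake Casimir element s as an operator on the super tensor square -/
def sEl (n : ℕ) : M2 ℂ n :=
  (∑ i : Idx n, ∑ j : Idx n,
    if ab j < ab i then ((-1 : ℂ) ^ (par j)) • kron2 ℂ (Em ℂ i j) (E ℂ j i) else 0)
  + (2 : ℂ)⁻¹ • (∑ k : Fin n,
      kron2 ℂ (Em ℂ (ppos k) (ppos k)) (E ℂ (ppos k) (ppos k) + E ℂ (nneg k) (nneg k)))
  + (2 : ℂ)⁻¹ • (∑ k : Fin n, kron2 ℂ (Em ℂ (nneg k) (ppos k)) (E ℂ (ppos k) (nneg k)))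

/-- C = Σ_{1≤i≤n} (E_ii + E_{−i,−i}) ⊗ (E_ii + E_{−i,−i}) -/
def CEl (n : ℕ) : M2 ℂ n :=
  ∑ k : Fin n, kron2 ℂ (E ℂ (ppos k) (ppos k) + E ℂ (nneg k) (nneg k))
    (E ℂ (ppos k) (ppos k) + E ℂ (nneg k) (nneg k))

/-! The operators `C_ij` are diagonal on the tensor cube: `C_ij` is the indicator that the
`i`-th and `j`-th indices have equal absolute value. Every matrix entry of `s`, from
`e_c ⊗ e_d` to `e_a ⊗ e_b`, has either `(|a|, |b|) = (|d|, |c|)` or `|a| = |b|` and `|c| = |d|`.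
Hence the `(x, y)` entry of `[sC] - 2[sCC]` is a sum of three terms `s_ij(x, y) · P_ij(x, y)`
with `P_ij` a polynomial in the indicators. On the support of `s_ij` the indicators at `x` and
at `y` are related by one of these two coincidences, and `P_ij` then vanishes because the
indicators are idempotent. So the identity holds for every `s` with this support. -/

namespace FakeCasimir

variable {R}

def absIdx : Idx n → Fin n
  | Sum.inl k => k
  | Sum.inr k => k

@[simp] lemma absIdx_ng (i : Idx n) : absIdx (ng i) = absIdx i := by cases i <;> rfl

variable (R) in
def absEqInd (a b : Idx n) : R := if absIdx a = absIdx b then 1 else 0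

lemma E_pos_add_E_neg_apply (k : Fin n) (a b : Idx n) :
    (E R (ppos k) (ppos k) + E R (nneg k) (nneg k)) a b
      = if a = b ∧ absIdx a = k then 1 else 0 := by
  rcases a with a | a <;> rcases b with b | b <;>
    simp [E, ppos, nneg, Matrix.single, absIdx] <;> aesop

lemma CEl_eq_diagonal : CEl n = diagonal fun x => absEqInd ℂ x.1 x.2 := by
  ext ⟨a, b⟩ ⟨c, d⟩
  simp only [CEl, Matrix.sum_apply, kron2, E_pos_add_E_neg_apply, diagonal_apply, absEqInd]
  by_cases hac : a = c
  · by_cases hbd : b = d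
    · subst hac hbd
      simp [eq_comm]
    · simp [hbd]
  · simp [hac]

def AbsPaired (x y : Idx n × Idx n) : Prop :=
  (absIdx x.1 = absIdx y.2 ∧ absIdx x.2 = absIdx y.1) ∨
    (absIdx x.1 = absIdx x.2 ∧ absIdx y.1 = absIdx y.2)

variable (R n) in
def absPairedSubmodule : Submodule R (M2 R n) where
  carrier := {M | ∀ x y, M x y ≠ 0 → AbsPaired x y}
  add_mem' {M N} hM hN x y h := by
    by_cases hMxy : M x y = 0
    · exact hN x y (by simpa [hMxy] using h)
    · exact hM x y hMxy
  zero_mem' _ _ h := absurd rfl h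
  smul_mem' _ _ hM x y h := hM x y (right_ne_zero_of_mul h)

lemma E_apply_ne_zero {i j a b : Idx n} (h : E R i j a b ≠ 0) : a = i ∧ b = j := by
  rw [E, Matrix.single_apply] at h
  split_ifs at h with hij
  · exact ⟨hij.1.symm, hij.2.symm⟩
  · exact absurd rfl h

lemma Em_apply_ne_zero {i j a b : Idx n} (h : Em R i j a b ≠ 0) :
    (a = i ∧ b = j) ∨ (a = ng j ∧ b = ng i) := by
  have hE : E R i j a b ≠ 0 ∨ E R (ng j) (ng i) a b ≠ 0 := by
    by_contra! h0
    exact h (by simp [Em, h0.1, h0.2])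
  exact hE.imp E_apply_ne_zero E_apply_ne_zero

lemma kron2_mem_absPairedSubmodule {A B : gl R n}
    (h : ∀ x y : Idx n × Idx n, A x.1 y.1 ≠ 0 → B x.2 y.2 ≠ 0 → AbsPaired x y) :
    kron2 R A B ∈ absPairedSubmodule R n := by
  intro x y hxy
  have hAB : A x.1 y.1 * B x.2 y.2 ≠ 0 := fun h0 => hxy (by simp [kron2, mul_assoc, h0])
  exact h x y (left_ne_zero_of_mul hAB) (right_ne_zero_of_mul hAB)

lemma kron2_Em_E_mem (i j : Idx n) : kron2 R (Em R i j) (E R j i) ∈ absPairedSubmodule R n := by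
  refine kron2_mem_absPairedSubmodule fun x y hA hB => ?_
  obtain ⟨hx2, hy2⟩ := E_apply_ne_zero hB
  rcases Em_apply_ne_zero hA with ⟨hx1, hy1⟩ | ⟨hx1, hy1⟩
  · exact Or.inl ⟨by rw [hx1, hy2], by rw [hx2, hy1]⟩
  · exact Or.inr ⟨by rw [hx1, hx2, absIdx_ng], by rw [hy1, hy2, absIdx_ng]⟩

lemma kron2_Em_E_pos_add_E_neg_mem (k : Fin n) :
    kron2 R (Em R (ppos k) (ppos k)) (E R (ppos k) (ppos k) + E R (nneg k) (nneg k))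
      ∈ absPairedSubmodule R n := by
  refine kron2_mem_absPairedSubmodule fun x y hA hB => ?_
  rw [E_pos_add_E_neg_apply, ne_eq, ite_eq_right_iff, not_forall] at hB
  obtain ⟨⟨hxy2, hx2⟩, -⟩ := hB
  have habs : absIdx x.1 = k ∧ absIdx y.1 = k := by
    rcases Em_apply_ne_zero hA with ⟨hx1, hy1⟩ | ⟨hx1, hy1⟩ <;>
      exact ⟨by rw [hx1]; rfl, by rw [hy1]; rfl⟩
  exact Or.inr ⟨habs.1.trans hx2.symm, by rw [habs.2, ← hxy2, hx2]⟩

lemma sEl_mem : sEl n ∈ absPairedSubmodule ℂ n := by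
  refine add_mem (add_mem (Submodule.sum_mem _ fun i _ => Submodule.sum_mem _ fun j _ => ?_)
    (Submodule.smul_mem _ _ (Submodule.sum_mem _ fun k _ => kron2_Em_E_pos_add_E_neg_mem k)))
    (Submodule.smul_mem _ _ (Submodule.sum_mem _ fun k _ => kron2_Em_E_mem _ _))
  split_ifs
  · exact Submodule.smul_mem _ _ (kron2_Em_E_mem i j)
  · exact zero_mem _

lemma lift12_diagonal (d : Idx n × Idx n → R) :
    lift12 R (diagonal d) = diagonal fun x => d (x.1, x.2.1) := by
  ext ⟨a, b, c⟩ ⟨a', b', c'⟩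
  simp only [lift12, diagonal_apply, Prod.mk.injEq]
  split_ifs <;> simp_all

lemma lift13_diagonal (d : Idx n × Idx n → R) :
    lift13 R (diagonal d) = diagonal fun x => d (x.1, x.2.2) := by
  ext ⟨a, b, c⟩ ⟨a', b', c'⟩
  simp only [lift13, diagonal_apply, Prod.mk.injEq]
  split_ifs <;> simp_all

lemma lift23_diagonal (d : Idx n × Idx n → R) :
    lift23 R (diagonal d) = diagonal fun x => d x.2 := by
  ext ⟨a, b, c⟩ ⟨a', b', c'⟩
  have hsign (p q r : ℕ) : (-1 : R) ^ ((p + p + q + q) * r) = 1 :=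
    Even.neg_one_pow ⟨(p + q) * r, by ring⟩
  simp only [lift23, diagonal_apply, Prod.mk.injEq]
  split_ifs <;> simp_all

lemma lift12_apply_ne_zero {M : M2 R n} {x y : Idx n × Idx n × Idx n}
    (h : lift12 R M x y ≠ 0) : x.2.2 = y.2.2 ∧ M (x.1, x.2.1) (y.1, y.2.1) ≠ 0 := by
  rw [lift12] at h
  split_ifs at h with h3
  · exact ⟨h3, h⟩
  · exact absurd rfl h

lemma lift13_apply_ne_zero {M : M2 R n} {x y : Idx n × Idx n × Idx n}
    (h : lift13 R M x y ≠ 0) : x.2.1 = y.2.1 ∧ M (x.1, x.2.2) (y.1, y.2.2) ≠ 0 := by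
  rw [lift13] at h
  split_ifs at h with h2
  · exact ⟨h2, right_ne_zero_of_mul h⟩
  · exact absurd rfl h

lemma lift23_apply_ne_zero {M : M2 R n} {x y : Idx n × Idx n × Idx n}
    (h : lift23 R M x y ≠ 0) : x.1 = y.1 ∧ M x.2 y.2 ≠ 0 := by
  rw [lift23] at h
  split_ifs at h with h1
  · exact ⟨h1, right_ne_zero_of_mul h⟩
  · exact absurd rfl h

variable {s : M2 R n}

lemma lift12_apply_mul_eq_zero (hs : s ∈ absPairedSubmodule R n)
    (x y : Idx n × Idx n × Idx n) :
    lift12 R s x y *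
      (absEqInd R y.1 y.2.2 + absEqInd R y.2.1 y.2.2
          - 2 * absEqInd R y.1 y.2.2 * absEqInd R y.2.1 y.2.2
        - (absEqInd R x.1 x.2.2 + absEqInd R x.2.1 x.2.2
          - 2 * absEqInd R x.1 x.2.2 * absEqInd R x.2.1 x.2.2)) = 0 := by
  by_cases h0 : lift12 R s x y = 0
  · rw [h0, zero_mul]
  obtain ⟨h3, hne⟩ := lift12_apply_ne_zero h0
  obtain ⟨a, b, c⟩ := x
  obtain ⟨a', b', c'⟩ := y
  obtain rfl : c = c' := h3
  refine mul_eq_zero_of_right _ ?_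
  have hp : AbsPaired (a, b) (a', b') := hs _ _ hne
  dsimp only [AbsPaired] at hp
  rcases hp with ⟨h1, h2⟩ | ⟨h1, h2⟩ <;>
    simp only [absEqInd, h1, h2] <;> split_ifs <;> grind

lemma lift13_apply_mul_eq_zero (hs : s ∈ absPairedSubmodule R n)
    (x y : Idx n × Idx n × Idx n) :
    lift13 R s x y *
      (absEqInd R x.1 x.2.1 + absEqInd R y.2.1 y.2.2
        - absEqInd R x.2.1 x.2.2 - absEqInd R y.1 y.2.1
        - 2 * absEqInd R x.1 x.2.1 * absEqInd R y.2.1 y.2.2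
        + 2 * absEqInd R x.2.1 x.2.2 * absEqInd R y.1 y.2.1) = 0 := by
  by_cases h0 : lift13 R s x y = 0
  · rw [h0, zero_mul]
  obtain ⟨h2, hne⟩ := lift13_apply_ne_zero h0
  obtain ⟨a, b, c⟩ := x
  obtain ⟨a', b', c'⟩ := y
  obtain rfl : b = b' := h2
  refine mul_eq_zero_of_right _ ?_
  have hp : AbsPaired (a, c) (a', c') := hs _ _ hne
  dsimp only [AbsPaired] at hp
  rcases hp with ⟨h1, h2⟩ | ⟨h1, h2⟩ <;>
    simp only [absEqInd, h1, h2] <;> split_ifs <;> grind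

lemma lift23_apply_mul_eq_zero (hs : s ∈ absPairedSubmodule R n)
    (x y : Idx n × Idx n × Idx n) :
    lift23 R s x y *
      (absEqInd R x.1 x.2.1 + absEqInd R x.1 x.2.2
          - 2 * absEqInd R x.1 x.2.1 * absEqInd R x.1 x.2.2
        - (absEqInd R y.1 y.2.1 + absEqInd R y.1 y.2.2
          - 2 * absEqInd R y.1 y.2.1 * absEqInd R y.1 y.2.2)) = 0 := by
  by_cases h0 : lift23 R s x y = 0
  · rw [h0, zero_mul]
  obtain ⟨h1, hne⟩ := lift23_apply_ne_zero h0
  obtain ⟨a, b, c⟩ := x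
  obtain ⟨a', b', c'⟩ := y
  obtain rfl : a = a' := h1
  refine mul_eq_zero_of_right _ ?_
  have hp : AbsPaired (b, c) (b', c') := hs _ _ hne
  dsimp only [AbsPaired] at hp
  rcases hp with ⟨h1, h2⟩ | ⟨h1, h2⟩ <;>
    simp only [absEqInd, h1, h2] <;> split_ifs <;> grind

end FakeCasimir

open FakeCasimir

/-- [sC] = 2[sCC]. -/
theorem sC_eq_two_sCC (n : ℕ) :
    lift12 ℂ (sEl n) * lift13 ℂ (CEl n) + lift12 ℂ (sEl n) * lift23 ℂ (CEl n)
    + lift13 ℂ (sEl n) * lift23 ℂ (CEl n) + lift12 ℂ (CEl n) * lift13 ℂ (sEl n)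
    + lift12 ℂ (CEl n) * lift23 ℂ (sEl n) + lift13 ℂ (CEl n) * lift23 ℂ (sEl n)
    - lift23 ℂ (sEl n) * lift13 ℂ (CEl n) - lift23 ℂ (sEl n) * lift12 ℂ (CEl n)
    - lift13 ℂ (sEl n) * lift12 ℂ (CEl n) - lift23 ℂ (CEl n) * lift13 ℂ (sEl n)
    - lift23 ℂ (CEl n) * lift12 ℂ (sEl n) - lift13 ℂ (CEl n) * lift12 ℂ (sEl n)
    = 2 • (lift12 ℂ (sEl n) * lift13 ℂ (CEl n) * lift23 ℂ (CEl n)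
      + lift12 ℂ (CEl n) * lift13 ℂ (sEl n) * lift23 ℂ (CEl n)
      + lift12 ℂ (CEl n) * lift13 ℂ (CEl n) * lift23 ℂ (sEl n)
      - lift23 ℂ (sEl n) * lift13 ℂ (CEl n) * lift12 ℂ (CEl n)
      - lift23 ℂ (CEl n) * lift13 ℂ (sEl n) * lift12 ℂ (CEl n)
      - lift23 ℂ (CEl n) * lift13 ℂ (CEl n) * lift12 ℂ (sEl n)) := by
  rw [CEl_eq_diagonal, lift12_diagonal, lift13_diagonal, lift23_diagonal]
  ext x y
  simp only [Matrix.add_apply, Matrix.sub_apply, Matrix.smul_apply, mul_diagonal, diagonal_mul,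
    diagonal_mul_diagonal, nsmul_eq_mul, Nat.cast_ofNat]
  linear_combination lift12_apply_mul_eq_zero sEl_mem x y + lift13_apply_mul_eq_zero sEl_mem x y
    + lift23_apply_mul_eq_zero sEl_mem x y
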